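/- Let $a > 0$, $b > 0$. There exist constants $\delta_0 > 0$ and $C > 0$ such that for all $0 < \delta < \delta_0$ and all real $\omega$ with $|\omega| \le C'\delta^{1/2}$ (for a fixed constant $C' > 0$), $\left|\frac{\delta}{\omega^2 - a\delta + \mathrm{i}\, b\,\omega\,\delta}\right| \le C\, \delta^{-1/2}$. -/

import Mathlib

/-! As a quadratic in `t = ω²`, `|ω² - aδ + i bωδ|² = (t - aδ)² + (bδ)² t` is minimised at
`t = aδ - (bδ)²/2`, with minimum `(bδ)² (aδ - (bδ/2)²)`. Once `δ ≤ 2a/b²` this is at least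
`(bδ)² aδ / 2`, so the denominator is of order `δ^{3/2}` uniformly in `ω`. -/

open Complex

theorem normSq_ofReal_add_I_mul (x y : ℝ) : normSq ((x : ℂ) + I * (y : ℂ)) = x ^ 2 + y ^ 2 := by
  rw [mul_comm, normSq_add_mul_I]

theorem resonance_sq_identity (a b δ ω : ℝ) :
    (ω ^ 2 - a * δ) ^ 2 + (b * ω * δ) ^ 2
      = (ω ^ 2 - a * δ + (b * δ) ^ 2 / 2) ^ 2 + (b * δ) ^ 2 * (a * δ - (b * δ / 2) ^ 2) := by
  ring

theorem resonance_sq_lower_bound (a b δ ω : ℝ) :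
    (b * δ) ^ 2 * (a * δ - (b * δ / 2) ^ 2) ≤ (ω ^ 2 - a * δ) ^ 2 + (b * ω * δ) ^ 2 := by
  rw [resonance_sq_identity]
  exact le_add_of_nonneg_left (sq_nonneg _)

theorem sq_norm_resonance_denom_ge (a b δ ω : ℝ) :
    (b * δ) ^ 2 * (a * δ - (b * δ / 2) ^ 2)
      ≤ ‖((ω ^ 2 - a * δ : ℝ) : ℂ) + I * ((b * ω * δ : ℝ) : ℂ)‖ ^ 2 := by
  rw [Complex.sq_norm, normSq_ofReal_add_I_mul]
  exact resonance_sq_lower_bound a b δ ω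

theorem norm_resonance_denom_ge {a b δ : ℝ} (ha : 0 < a) (hb : 0 < b) (hδ : 0 < δ)
    (hδb : b ^ 2 * δ ≤ 2 * a) (ω : ℝ) :
    b * √(a / 2) * (δ * √δ) ≤ ‖((ω ^ 2 - a * δ : ℝ) : ℂ) + I * ((b * ω * δ : ℝ) : ℂ)‖ := by
  refine le_of_sq_le_sq ?_ (norm_nonneg _)
  calc (b * √(a / 2) * (δ * √δ)) ^ 2 = (b * δ) ^ 2 * (a * δ / 2) := by
        rw [mul_pow, mul_pow, mul_pow, Real.sq_sqrt (by positivity), Real.sq_sqrt hδ.le]; ring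
    _ ≤ (b * δ) ^ 2 * (a * δ - (b * δ / 2) ^ 2) := by
        gcongr; nlinarith
    _ ≤ _ := sq_norm_resonance_denom_ge a b δ ω

theorem enhancement_coefficient_order_general (a b : ℝ) (ha : 0 < a) (hb : 0 < b)
    (C' : ℝ) :
    ∃ δ₀ > 0, ∃ C > 0, ∀ δ : ℝ, 0 < δ → δ < δ₀ →
      ∀ ω : ℝ, |ω| ≤ C' * Real.sqrt δ →
        ‖(δ : ℂ) /
          (((ω ^ 2 - a * δ : ℝ) : ℂ) + Complex.I * ((b * ω * δ : ℝ) : ℂ))‖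
          ≤ C / Real.sqrt δ := by
  refine ⟨2 * a / b ^ 2, by positivity, 1 / (b * √(a / 2)), by positivity, ?_⟩
  intro δ hδ hδ₀ ω _
  have hδb : b ^ 2 * δ ≤ 2 * a := by
    rw [lt_div_iff₀ (by positivity)] at hδ₀; linarith
  have hdenom := norm_resonance_denom_ge ha hb hδ hδb ω
  have hsqrt : 0 < √δ := Real.sqrt_pos.2 hδ
  rw [norm_div, Complex.norm_real, Real.norm_of_nonneg hδ.le]
  calc δ / ‖((ω ^ 2 - a * δ : ℝ) : ℂ) + I * ((b * ω * δ : ℝ) : ℂ)‖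
      ≤ δ / (b * √(a / 2) * (δ * √δ)) := div_le_div_of_nonneg_left hδ.le (by positivity) hdenom
    _ = 1 / (b * √(a / 2)) / √δ := by field_simp

/-- Order of the resonance enhancement coefficient: for `a, b > 0` and every fixed
`C' > 0`, there are `δ₀ > 0` and `C > 0` such that for `0 < δ < δ₀` and real `ω`
with `|ω| ≤ C' δ^{1/2}`, `|δ / (ω² - aδ + i b ω δ)| ≤ C δ^{-1/2}`. -/
theorem enhancement_coefficient_order (a b : ℝ) (ha : 0 < a) (hb : 0 < b)
    (C' : ℝ) (hC' : 0 < C') :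
    ∃ δ₀ > 0, ∃ C > 0, ∀ δ : ℝ, 0 < δ → δ < δ₀ →
      ∀ ω : ℝ, |ω| ≤ C' * Real.sqrt δ →
        ‖(δ : ℂ) /
          (((ω ^ 2 - a * δ : ℝ) : ℂ) + Complex.I * ((b * ω * δ : ℝ) : ℂ))‖
          ≤ C / Real.sqrt δ :=
  enhancement_coefficient_order_general a b ha hb C'
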